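/- Let n ≥ 1 and k ≥ 1 be integers. Define S = {(x, z, t) ∈ ℝ^n × ℝ^n × ℝ : each z_i ∈ {0,1}, t ≥ ∑_{i=1}^n x_i², ∑_{i=1}^n z_i ≤ k, and x_i = 0 whenever z_i = 0}, and S^c = {(x, z, θ, t) ∈ ℝ^n × ℝ^n × ℝ^n × ℝ : 0 ≤ z_i ≤ 1 and θ_i ≥ 0 for all i, t ≥ ∑_{i=1}^n θ_i, ∑_{i=1}^n z_i ≤ k, and θ_i z_i ≥ x_i² for all i}. Then the closure of the convex hull of S equals the image of S^c under the projection (x, z, θ, t) ↦ (x, z, t). -/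

import Mathlib

/-! The projection `Q` of `S^c` contains `S`; it is convex because `x² ≤ θ z` with `θ, z ≥ 0`
is a rotated second-order cone, and closed because, for `z ≥ 0`, it is cut out by the continuous
constraints `∑ x_i² / (z_i + ε) ≤ t`, `ε > 0`. Hence `Q` contains the closed convex hull of `S`.

Conversely, let `(x, z, t) ∈ Q` and `c_i = x_i / z_i`. The extreme points of the polytope
`{z ∈ [0,1]^n | ∑ z ≤ k}` are 0/1 vectors because `k` is an integer, so `z` is a convex combination
of 0/1 vectors `v` with at most `k` ones. The affine map `v ↦ (c v, v, ∑ c_i² v_i + s)`, with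
slack `s = t - ∑ x_i² / z_i ≥ 0`, sends these vertices into `S` and `z` to `(x, z, t)`, so
`Q ⊆ conv S`. -/

open Finset Set

def cappedCube (ι : Type*) [Fintype ι] (k : ℕ) : Set (ι → ℝ) :=
  {z | (∀ i, 0 ≤ z i ∧ z i ≤ 1) ∧ ∑ i, z i ≤ k}

def cappedCubeVertices (ι : Type*) [Fintype ι] (k : ℕ) : Set (ι → ℝ) :=
  {v | (∀ i, v i = 0 ∨ v i = 1) ∧ ∑ i, v i ≤ k}

def sparseEpigraph (ι : Type*) [Fintype ι] (k : ℕ) : Set ((ι → ℝ) × (ι → ℝ) × ℝ) :=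
  {q | (∀ i, q.2.1 i = 0 ∨ q.2.1 i = 1) ∧ (∑ i, (q.1 i) ^ 2) ≤ q.2.2 ∧
    (∑ i, q.2.1 i) ≤ (k : ℝ) ∧ ∀ i, q.2.1 i = 0 → q.1 i = 0}

def perspectiveRelaxation (ι : Type*) [Fintype ι] (k : ℕ) :
    Set ((ι → ℝ) × (ι → ℝ) × (ι → ℝ) × ℝ) :=
  {q | (∀ i, 0 ≤ q.2.1 i ∧ q.2.1 i ≤ 1) ∧ (∀ i, 0 ≤ q.2.2.1 i) ∧ (∑ i, q.2.2.1 i) ≤ q.2.2.2 ∧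
    (∑ i, q.2.1 i) ≤ (k : ℝ) ∧ ∀ i, (q.1 i) ^ 2 ≤ q.2.2.1 i * q.2.1 i}

def projXZT (ι : Type*) (q : (ι → ℝ) × (ι → ℝ) × (ι → ℝ) × ℝ) : (ι → ℝ) × (ι → ℝ) × ℝ :=
  (q.1, q.2.1, q.2.2.2)

theorem eq_zero_of_add_mem_of_sub_mem_extremePoints {E : Type*} [AddCommGroup E] [Module ℝ E]
    {A : Set E} {x d : E} (hx : x ∈ A.extremePoints ℝ) (hadd : x + d ∈ A) (hsub : x - d ∈ A) :
    d = 0 := by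
  have hmid : x ∈ openSegment ℝ (x - d) (x + d) :=
    ⟨1 / 2, 1 / 2, by norm_num, by norm_num, by norm_num, by module⟩
  simpa using hx.2 hsub hadd hmid

theorem sq_add_le_mul_add_of_sq_le_mul {a b x₁ x₂ z₁ z₂ θ₁ θ₂ : ℝ} (ha : 0 ≤ a) (hb : 0 ≤ b)
    (hz₁ : 0 ≤ z₁) (hz₂ : 0 ≤ z₂) (hθ₁ : 0 ≤ θ₁) (hθ₂ : 0 ≤ θ₂)
    (h₁ : x₁ ^ 2 ≤ θ₁ * z₁) (h₂ : x₂ ^ 2 ≤ θ₂ * z₂) :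
    (a * x₁ + b * x₂) ^ 2 ≤ (a * θ₁ + b * θ₂) * (a * z₁ + b * z₂) := by
  have hcross : 2 * (x₁ * x₂) ≤ θ₁ * z₂ + θ₂ * z₁ := by
    have hprod : (x₁ * x₂) ^ 2 ≤ (θ₁ * z₂) * (θ₂ * z₁) := by
      rw [mul_pow]; nlinarith [mul_le_mul h₁ h₂ (sq_nonneg x₂) (mul_nonneg hθ₁ hz₁)]
    -- AM–GM for `θ₁ z₂` and `θ₂ z₁`
    by_contra! h
    nlinarith [sq_nonneg (θ₁ * z₂ - θ₂ * z₁), mul_nonneg hθ₁ hz₂, mul_nonneg hθ₂ hz₁]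
  nlinarith [mul_nonneg (mul_nonneg ha hb) (sub_nonneg.2 hcross),
    mul_nonneg (sq_nonneg a) (sub_nonneg.2 h₁), mul_nonneg (sq_nonneg b) (sub_nonneg.2 h₂)]

section

variable {ι : Type*} [Fintype ι]

theorem convex_cappedCube (k : ℕ) : Convex ℝ (cappedCube ι k) := by
  rintro z ⟨hz, hzs⟩ w ⟨hw, hws⟩ a b ha hb hab
  refine ⟨fun i => ⟨?_, ?_⟩, ?_⟩
  · simp only [Pi.add_apply, Pi.smul_apply, smul_eq_mul]
    nlinarith [hz i, hw i]
  · simp only [Pi.add_apply, Pi.smul_apply, smul_eq_mul]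
    nlinarith [hz i, hw i]
  · simp only [Pi.add_apply, Pi.smul_apply, smul_eq_mul, sum_add_distrib, ← mul_sum]
    nlinarith

theorem isCompact_cappedCube (k : ℕ) : IsCompact (cappedCube ι k) := by
  have hclosed : IsClosed (cappedCube ι k) := by
    rw [cappedCube, ofPred_and, ofPred_forall]
    exact (isClosed_iInter fun i => (isClosed_le continuous_const (continuous_apply i)).inter
      (isClosed_le (continuous_apply i) continuous_const)).inter
      (isClosed_le (continuous_finsetSum _ fun i _ => continuous_apply i) continuous_const)
  exact isCompact_Icc.of_isClosed_subset hclosed fun z hz =>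
    ⟨fun i => (hz.1 i).1, fun i => (hz.1 i).2⟩

theorem finite_cappedCubeVertices (k : ℕ) : (cappedCubeVertices ι k).Finite :=
  (Set.Finite.pi fun _ => (Set.finite_singleton (1 : ℝ)).insert 0).subset
    fun _ hv i _ => hv.1 i

theorem add_sub_mem_cappedCube {k : ℕ} {z d : ι → ℝ}
    (hd : ∀ i, |d i| ≤ min (z i) (1 - z i)) (hs : |∑ i, d i| ≤ k - ∑ i, z i) :
    z + d ∈ cappedCube ι k ∧ z - d ∈ cappedCube ι k := by
  have hd' := fun i => abs_le.1 ((hd i).trans (min_le_left _ _))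
  have hd'' := fun i => abs_le.1 ((hd i).trans (min_le_right _ _))
  have hs' := abs_le.1 hs
  refine ⟨⟨fun i => ?_, ?_⟩, ⟨fun i => ?_, ?_⟩⟩ <;>
    simp only [Pi.add_apply, Pi.sub_apply, sum_add_distrib, sum_sub_distrib]
  · constructor <;> linarith [hd' i, hd'' i]
  · linarith
  · constructor <;> linarith [hd' i, hd'' i]
  · linarith

theorem sum_ne_natCast_of_unique_fractional {z : ι → ℝ} {i : ι} (hi : 0 < z i ∧ z i < 1)
    (hint : ∀ j ≠ i, z j = 0 ∨ z j = 1) (k : ℕ) : ∑ j, z j ≠ k := by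
  classical
  intro hk
  obtain ⟨m, hm⟩ : ∑ j ∈ univ.erase i, z j ∈ (Int.castAddHom ℝ).range :=
    AddSubgroup.sum_mem _ fun j hj => by
      rcases hint j (ne_of_mem_erase hj) with h | h
      exacts [⟨0, by simp [h]⟩, ⟨1, by simp [h]⟩]
  rw [← add_sum_erase _ _ (mem_univ i), ← hm, Int.coe_castAddHom] at hk
  have h0 : ((0 : ℤ) : ℝ) < ((k - m : ℤ) : ℝ) := by push_cast; linarith
  have h1 : ((k - m : ℤ) : ℝ) < ((1 : ℤ) : ℝ) := by push_cast; linarith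
  norm_cast at h0 h1
  omega

theorem extremePoints_cappedCube_subset (k : ℕ) :
    (cappedCube ι k).extremePoints ℝ ⊆ cappedCubeVertices ι k := by
  classical
  intro z hz
  obtain ⟨hbox, hsum⟩ := hz.1
  have hdichotomy : ∀ j, (z j = 0 ∨ z j = 1) ∨ (0 < z j ∧ z j < 1) := fun j => by
    rcases (hbox j).1.eq_or_lt with h | h0
    · exact Or.inl (Or.inl h.symm)
    rcases (hbox j).2.eq_or_lt with h | h1
    · exact Or.inl (Or.inr h)
    exact Or.inr ⟨h0, h1⟩
  refine ⟨fun i => (hdichotomy i).resolve_right fun hi => ?_, hsum⟩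
  have hnonneg : ∀ l, 0 ≤ min (z l) (1 - z l) := fun l => le_min (hbox l).1 (by linarith [hbox l])
  suffices ∃ d : ι → ℝ, d ≠ 0 ∧ (∀ l, |d l| ≤ min (z l) (1 - z l)) ∧ |∑ l, d l| ≤ k - ∑ l, z l by
    obtain ⟨d, hd0, hd, hs⟩ := this
    obtain ⟨hadd, hsub⟩ := add_sub_mem_cappedCube hd hs
    exact hd0 (eq_zero_of_add_mem_of_sub_mem_extremePoints hz hadd hsub)
  by_cases hj : ∃ j ≠ i, 0 < z j ∧ z j < 1
  · obtain ⟨j, hji, hj⟩ := hj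
    set ε := min (min (z i) (1 - z i)) (min (z j) (1 - z j))
    have hε : 0 < ε := lt_min (lt_min hi.1 (by linarith)) (lt_min hj.1 (by linarith))
    have hεi : ε ≤ min (z i) (1 - z i) := min_le_left _ _
    have hεj : ε ≤ min (z j) (1 - z j) := min_le_right _ _
    refine ⟨Pi.single i ε - Pi.single j ε, fun h => ?_, fun l => ?_, ?_⟩
    · simpa [hji.symm, hε.ne'] using congrFun h i
    · rcases eq_or_ne l i with rfl | hli
      · simpa [hji.symm, abs_of_pos hε] using hεi
      rcases eq_or_ne l j with rfl | hlj
      · simpa [hli, abs_of_pos hε] using hεj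
      simpa [hli, hlj] using hnonneg l
    · simpa using sub_nonneg.2 hsum
  · push Not at hj
    have hint : ∀ j ≠ i, z j = 0 ∨ z j = 1 := fun j hji =>
      (hdichotomy j).resolve_right fun h => (hj j hji h.1).not_gt h.2
    have hlt : ∑ l, z l < k := hsum.lt_of_ne (sum_ne_natCast_of_unique_fractional hi hint k)
    set ε := min (min (z i) (1 - z i)) (k - ∑ l, z l)
    have hε : 0 < ε := lt_min (lt_min hi.1 (by linarith)) (by linarith)
    have hεi : ε ≤ min (z i) (1 - z i) := min_le_left _ _
    have hεs : ε ≤ k - ∑ l, z l := min_le_right _ _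
    refine ⟨Pi.single i ε, fun h => ?_, fun l => ?_, ?_⟩
    · simpa [hε.ne'] using congrFun h i
    · rcases eq_or_ne l i with rfl | hli
      · simpa [abs_of_pos hε] using hεi
      simpa [hli] using hnonneg l
    · simpa [abs_of_pos hε] using hεs

theorem cappedCube_subset_convexHull (k : ℕ) :
    cappedCube ι k ⊆ convexHull ℝ (cappedCubeVertices ι k) := by
  rw [← closure_convexHull_extremePoints (isCompact_cappedCube k) (convex_cappedCube k)]
  refine (closure_mono (convexHull_mono (extremePoints_cappedCube_subset k))).trans ?_
  exact (finite_cappedCubeVertices k).isCompact_convexHull (𝕜 := ℝ) |>.isClosed.closure_subset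

theorem convex_perspectiveRelaxation (k : ℕ) : Convex ℝ (perspectiveRelaxation ι k) := by
  rintro ⟨x, z, θ, t⟩ ⟨hz, hθ, hθt, hzk, hxθ⟩ ⟨x', z', θ', t'⟩ ⟨hz', hθ', hθt', hzk', hxθ'⟩
    a b ha hb hab
  simp only [Prod.smul_mk, Prod.mk_add_mk]
  have hzcube := convex_cappedCube k ⟨hz, hzk⟩ ⟨hz', hzk'⟩ ha hb hab
  refine ⟨hzcube.1, fun i => ?_, ?_, hzcube.2, fun i => ?_⟩
  · simp only [Pi.add_apply, Pi.smul_apply, smul_eq_mul]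
    nlinarith [hθ i, hθ' i]
  · simp only [Pi.add_apply, Pi.smul_apply, smul_eq_mul, sum_add_distrib, ← mul_sum]
    nlinarith
  · simp only [Pi.add_apply, Pi.smul_apply, smul_eq_mul]
    exact sq_add_le_mul_add_of_sq_le_mul ha hb (hz i).1 (hz' i).1 (hθ i) (hθ' i) (hxθ i) (hxθ' i)

theorem convex_image_projXZT_perspectiveRelaxation (k : ℕ) :
    Convex ℝ (projXZT ι '' perspectiveRelaxation ι k) :=
  (convex_perspectiveRelaxation k).is_linear_image ⟨fun _ _ => rfl, fun _ _ => rfl⟩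

theorem sparseEpigraph_subset_image_projXZT (k : ℕ) :
    sparseEpigraph ι k ⊆ projXZT ι '' perspectiveRelaxation ι k := by
  rintro ⟨x, z, t⟩ ⟨hz, hxt, hzk, hsupp⟩
  dsimp only at hz hsupp
  refine ⟨(x, z, fun i => x i ^ 2, t),
    ⟨fun i => ?_, fun i => sq_nonneg _, hxt, hzk, fun i => ?_⟩, rfl⟩
  · rcases hz i with h | h <;> simp [h]
  · rcases hz i with h | h <;> simp [h, hsupp i]

theorem exists_perspective_bound_iff {x z : ι → ℝ} {t : ℝ} (hz : ∀ i, 0 ≤ z i) :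
    (∃ θ : ι → ℝ, (∀ i, 0 ≤ θ i) ∧ ∑ i, θ i ≤ t ∧ ∀ i, x i ^ 2 ≤ θ i * z i) ↔
      ∀ ε > 0, ∑ i, x i ^ 2 / (z i + ε) ≤ t := by
  have hzero : (0 : ℝ) ∈ closure (Ioi 0) := by simp
  constructor
  · rintro ⟨θ, hθ, hθt, hxθ⟩ ε hε
    refine le_trans (sum_le_sum fun i _ => ?_) hθt
    rw [div_le_iff₀ (by linarith [hz i])]
    nlinarith [hxθ i, hθ i]
  · intro h
    have hterm : ∀ i, ∀ ε ∈ Ioi (0 : ℝ), x i ^ 2 ≤ t * (z i + ε) := fun i ε hε => by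
      have hpos : 0 < z i + ε := by linarith [hz i, mem_Ioi.1 hε]
      rw [← div_le_iff₀ hpos]
      refine le_trans ?_ (h ε hε)
      exact single_le_sum (f := fun j => x j ^ 2 / (z j + ε))
        (fun j _ => div_nonneg (sq_nonneg _) (by linarith [hz j, mem_Ioi.1 hε])) (mem_univ i)
    have hxz : ∀ i, z i = 0 → x i ^ 2 = 0 := fun i hzi => by
      refine le_antisymm ?_ (sq_nonneg _)
      simpa [hzi] using ContinuousWithinAt.closure_le hzero continuousWithinAt_const
        (by fun_prop : Continuous fun ε : ℝ => t * (z i + ε)).continuousWithinAt (hterm i)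
    have hcont : ∀ i, ContinuousAt (fun ε : ℝ => x i ^ 2 / (z i + ε)) 0 := fun i => by
      rcases eq_or_ne (z i) 0 with h | h
      · simp only [hxz i h, zero_div]
        exact continuousAt_const
      · exact continuousAt_const.div (continuousAt_const.add continuousAt_id) (by simpa using h)
    refine ⟨fun i => x i ^ 2 / z i, fun i => div_nonneg (sq_nonneg _) (hz i), ?_,
      fun i => (div_mul_cancel_of_imp (hxz i)).ge⟩
    simpa using ContinuousWithinAt.closure_le hzero
      (ContinuousAt.continuousWithinAt (tendsto_finsetSum _ fun i _ => hcont i))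
      continuousWithinAt_const h

theorem mem_image_projXZT_iff {k : ℕ} {p : (ι → ℝ) × (ι → ℝ) × ℝ} :
    p ∈ projXZT ι '' perspectiveRelaxation ι k ↔ p.2.1 ∈ cappedCube ι k ∧
      ∃ θ : ι → ℝ, (∀ i, 0 ≤ θ i) ∧ ∑ i, θ i ≤ p.2.2 ∧ ∀ i, p.1 i ^ 2 ≤ θ i * p.2.1 i := by
  constructor
  · rintro ⟨⟨x, z, θ, t⟩, ⟨hz, hθ, hθt, hzk, hxθ⟩, rfl⟩
    exact ⟨⟨hz, hzk⟩, θ, hθ, hθt, hxθ⟩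
  · rintro ⟨⟨hz, hzk⟩, θ, hθ, hθt, hxθ⟩
    exact ⟨(p.1, p.2.1, θ, p.2.2), ⟨hz, hθ, hθt, hzk, hxθ⟩, rfl⟩

theorem isClosed_image_projXZT (k : ℕ) : IsClosed (projXZT ι '' perspectiveRelaxation ι k) := by
  set C := {p : (ι → ℝ) × (ι → ℝ) × ℝ | p.2.1 ∈ cappedCube ι k}
  have hC : IsClosed C :=
    (isCompact_cappedCube k).isClosed.preimage (continuous_fst.comp continuous_snd)
  have hnonneg : ∀ p ∈ C, ∀ i, 0 ≤ p.2.1 i := fun p hp i => (hp.1 i).1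
  have hchar : projXZT ι '' perspectiveRelaxation ι k =
      ⋂ ε ∈ Ioi (0 : ℝ), {p ∈ C | ∑ i, p.1 i ^ 2 / (p.2.1 i + ε) ≤ p.2.2} := by
    ext p
    simp only [mem_image_projXZT_iff, mem_iInter, Set.mem_Ioi, mem_sep_iff]
    constructor
    · rintro ⟨hp, hθ⟩ ε hε
      exact ⟨hp, (exists_perspective_bound_iff (hnonneg p hp)).1 hθ ε hε⟩
    · intro h
      have hp : p ∈ C := (h 1 one_pos).1
      exact ⟨hp, (exists_perspective_bound_iff (hnonneg p hp)).2 fun ε hε => (h ε hε).2⟩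
  rw [hchar]
  refine isClosed_biInter fun ε hε => hC.isClosed_le ?_ (by fun_prop)
  refine continuousOn_finsetSum _ fun i _ => ContinuousOn.div (by fun_prop) (by fun_prop) ?_
  exact fun p hp => (add_pos_of_nonneg_of_pos (hnonneg p hp i) hε).ne'

theorem image_projXZT_subset_convexHull (k : ℕ) :
    projXZT ι '' perspectiveRelaxation ι k ⊆ convexHull ℝ (sparseEpigraph ι k) := by
  rintro _ ⟨⟨x, z, θ, t⟩, ⟨hz, hθ, hθt, hzk, hxθ⟩, rfl⟩
  dsimp only at hz hθ hθt hzk hxθ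
  have hsupp : ∀ i, z i = 0 → x i = 0 := fun i h =>
    pow_eq_zero_iff two_ne_zero |>.1 <| le_antisymm (by simpa [h] using hxθ i) (sq_nonneg _)
  -- where `z i = 0` also `x i = 0`, so the junk value `x i / 0 = 0` still gives `c i * z i = x i`
  set c : ι → ℝ := fun i => x i / z i
  have hcz : ∀ i, c i * z i = x i := fun i => div_mul_cancel_of_imp (hsupp i)
  have hcθ : ∀ i, c i ^ 2 * z i ≤ θ i := fun i => by
    rcases (hz i).1.eq_or_lt with h | h
    · simpa [← h] using hθ i
    · refine le_of_mul_le_mul_right ?_ h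
      rw [show c i ^ 2 * z i * z i = (c i * z i) ^ 2 by ring, hcz i]
      exact hxθ i
  set s := t - ∑ i, c i ^ 2 * z i
  have hs : 0 ≤ s := sub_nonneg.2 ((sum_le_sum fun i _ => hcθ i).trans hθt)
  let Lin : (ι → ℝ) →ₗ[ℝ] (ι → ℝ) × (ι → ℝ) × ℝ :=
    (LinearMap.pi fun i => c i • LinearMap.proj i).prod
      (LinearMap.id.prod (∑ i, (c i ^ 2) • LinearMap.proj i))
  let L : (ι → ℝ) →ᵃ[ℝ] (ι → ℝ) × (ι → ℝ) × ℝ := Lin.toAffineMap + AffineMap.const ℝ _ (0, 0, s)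
  have hL : ∀ v, L v = (fun i => c i * v i, v, ∑ i, c i ^ 2 * v i + s) := fun v => by
    ext i <;> simp [L, Lin]
  have hLz : L z = projXZT ι (x, z, θ, t) := by
    rw [hL]
    exact Prod.ext (funext hcz) (Prod.ext rfl (add_sub_cancel _ _))
  have hLV : L '' cappedCubeVertices ι k ⊆ sparseEpigraph ι k := by
    rintro _ ⟨v, ⟨hv, hvk⟩, rfl⟩
    rw [hL]
    refine ⟨hv, ?_, hvk, fun i (h : v i = 0) => by simp [h]⟩
    have hsq : ∀ i, (c i * v i) ^ 2 = c i ^ 2 * v i := fun i => by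
      rcases hv i with h | h <;> simp [h]
    simpa [hsq] using hs
  rw [← hLz]
  exact convexHull_mono hLV <| L.image_convexHull _ ▸
    mem_image_of_mem L (cappedCube_subset_convexHull k ⟨hz, hzk⟩)

theorem closure_convexHull_sparseEpigraph (k : ℕ) :
    closure (convexHull ℝ (sparseEpigraph ι k)) = projXZT ι '' perspectiveRelaxation ι k :=
  (closure_minimal (convexHull_min (sparseEpigraph_subset_image_projXZT k)
      (convex_image_projXZT_perspectiveRelaxation k)) (isClosed_image_projXZT k)).antisymm
    ((image_projXZT_subset_convexHull k).trans subset_closure)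

end

theorem stmt18_general (n k : ℕ) :
    closure (convexHull ℝ
      {q : (Fin n → ℝ) × (Fin n → ℝ) × ℝ |
        (∀ i, q.2.1 i = 0 ∨ q.2.1 i = 1) ∧
        (∑ i, (q.1 i) ^ 2) ≤ q.2.2 ∧
        (∑ i, q.2.1 i) ≤ (k : ℝ) ∧
        ∀ i, q.2.1 i = 0 → q.1 i = 0}) =
    (fun q : (Fin n → ℝ) × (Fin n → ℝ) × (Fin n → ℝ) × ℝ => (q.1, q.2.1, q.2.2.2)) ''
      {q | (∀ i, 0 ≤ q.2.1 i ∧ q.2.1 i ≤ 1) ∧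
           (∀ i, 0 ≤ q.2.2.1 i) ∧
           (∑ i, q.2.2.1 i) ≤ q.2.2.2 ∧
           (∑ i, q.2.1 i) ≤ (k : ℝ) ∧
           ∀ i, (q.1 i) ^ 2 ≤ q.2.2.1 i * q.2.1 i} :=
  closure_convexHull_sparseEpigraph k

/-- Lemma 2 (Günlük–Linderoth perspective reformulation): the closed convex hull of
`S` equals the projection of `S^c` onto the `(x, z, t)` coordinates. -/
theorem stmt18 (n k : ℕ) (hn : 1 ≤ n) (hk : 1 ≤ k) :
    closure (convexHull ℝ
      {q : (Fin n → ℝ) × (Fin n → ℝ) × ℝ |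
        (∀ i, q.2.1 i = 0 ∨ q.2.1 i = 1) ∧
        (∑ i, (q.1 i) ^ 2) ≤ q.2.2 ∧
        (∑ i, q.2.1 i) ≤ (k : ℝ) ∧
        ∀ i, q.2.1 i = 0 → q.1 i = 0}) =
    (fun q : (Fin n → ℝ) × (Fin n → ℝ) × (Fin n → ℝ) × ℝ => (q.1, q.2.1, q.2.2.2)) ''
      {q | (∀ i, 0 ≤ q.2.1 i ∧ q.2.1 i ≤ 1) ∧
           (∀ i, 0 ≤ q.2.2.1 i) ∧
           (∑ i, q.2.2.1 i) ≤ q.2.2.2 ∧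
           (∑ i, q.2.1 i) ≤ (k : ℝ) ∧
           ∀ i, (q.1 i) ^ 2 ≤ q.2.2.1 i * q.2.1 i} :=
  stmt18_general n k
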